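/- Let p, q, r ∈ (1,∞) satisfy 1/p + 1/q + 1/r = 2, and fix functions Θ, R with Θ(ρ) → 0 as ρ → ∞ and R(t) → ∞ as t → 0. For every ε > 0 there exists η_0 > 0 such that for every η ∈ (0, η_0] there exists δ_0 > 0 with the following property: for all δ ∈ (0, δ_0], every nonnegative f ∈ L^p(ℝ) with ‖f‖_p = 1 which is δ-normalized with exponent p with respect to Θ, R, and every nonnegative Gaussian 𝓕 which is the first component of an extremizing triple and satisfies ‖f^⋆ − 𝓕‖_p ≤ δ, one has ‖min(f, η)‖_p + ‖max(0, f − (‖𝓕‖_∞ − η))‖_p ≤ ε. (Equivalently, ‖∫_{α ∉ [η, ‖𝓕‖_∞ − η]} 1_{F_α} dα‖_p ≤ ε, where F_α = {x : f(x) > α}.) The corresponding statements hold for the second and third components with exponents q and r respectively. -/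

import Mathlib

open MeasureTheory Filter Metric Set
noncomputable section

/-- Convolution of real-valued functions on ℝ. -/
def conv (f g : ℝ → ℝ) : ℝ → ℝ := fun x => ∫ y, f (x - y) * g y

/-- The pairing ⟨u,v⟩ = ∫ u v. -/
def pairing (u v : ℝ → ℝ) : ℝ := ∫ x, u x * v x

/-- The L^s(ℝ) norm (real-valued). -/
def nrm (s : ℝ) (f : ℝ → ℝ) : ℝ := (eLpNorm f (ENNReal.ofReal s) volume).toReal

/-- The L^∞(ℝ) norm (real-valued). -/
def nrmInf (f : ℝ → ℝ) : ℝ := (eLpNorm f ⊤ volume).toReal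

/-- C_s = (s^{1/s}/(s')^{1/s'})^{1/2} where s' = s/(s-1). -/
def Cst (s : ℝ) : ℝ := Real.sqrt ((s ^ (1/s)) / ((s/(s-1)) ^ (1/(s/(s-1)))))

/-- The sharp Young constant A_{p,q,r} = C_p C_q C_r. -/
def Apqr (p q r : ℝ) : ℝ := Cst p * Cst q * Cst r

/-- f is η-normalized with exponent p with respect to Θ, R. -/
def IsNormalized (Θ Rf : ℝ → ℝ) (p η : ℝ) (f : ℝ → ℝ) : Prop :=
  (eLpNorm f (ENNReal.ofReal p) volume).toReal = 1 ∧
  ∀ ρ : ℝ, 0 < ρ → ρ ≤ Rf η →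
    (∫ x in {x : ℝ | ρ < |f x|}, |f x| ^ p) ≤ Θ ρ ∧
    (∫ x in {x : ℝ | |f x| < ρ⁻¹}, |f x| ^ p) ≤ Θ ρ

/-- An extremizing triple for sharp Young's inequality on ℝ. -/
def ExtremizingTriple (p q r : ℝ) (F G H : ℝ → ℝ) : Prop :=
  MemLp F (ENNReal.ofReal p) volume ∧ MemLp G (ENNReal.ofReal q) volume ∧
  MemLp H (ENNReal.ofReal r) volume ∧
  nrm p F ≠ 0 ∧ nrm q G ≠ 0 ∧ nrm r H ≠ 0 ∧
  pairing (conv F G) H = Apqr p q r * nrm p F * nrm q G * nrm r H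

/-- fs is (a.e. version of) the symmetric nonincreasing rearrangement of f:
nonnegative, symmetric nonincreasing, and equimeasurable with f. -/
def IsRearrangement (f fs : ℝ → ℝ) : Prop :=
  (∀ x, 0 ≤ fs x) ∧ (∀ x y : ℝ, |x| ≤ |y| → fs y ≤ fs x) ∧
  (∀ t : ℝ, 0 < t → volume {x : ℝ | t < fs x} = volume {x : ℝ | t < f x})

/-- F is a (nonnegative) Gaussian on ℝ. -/
def IsGaussian (F : ℝ → ℝ) : Prop :=
  ∃ c lam a : ℝ, 0 < c ∧ 0 < lam ∧ ∀ x, F x = c * Real.exp (-(lam * (x - a)^2))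

/-! Small values: pointwise `min f η ≤ 1_{f < 1/ρ} f + ηρ f`, so by Minkowski and the
normalization `‖min f η‖_p ≤ Θ(ρ)^{1/p} + ηρ`.

Large values: with `M = ‖𝓕‖_∞`, equimeasurability gives `‖(f - (M - η))₊‖_p = ‖(f^⋆ - (M - η))₊‖_p`,
and pointwise `(f^⋆ - (M - η))₊ ≤ |f^⋆ - 𝓕| + η / (M - η) · 𝓕`, hence the bound `δ + 2η / (M - η)`.
This is small once `M` is bounded below, which follows from `f^⋆ ≤ min (f^⋆, 2M) + 2|f^⋆ - 𝓕|`
and the small-value estimate: `1 ≤ Θ(ρ)^{1/p} + 2Mρ + 2δ`. -/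

open scoped ENNReal Topology

theorem Filter.Eventually.exists_forall_Ioc {α : Type*} [TopologicalSpace α] [LinearOrder α]
    [OrderTopology α] [NoMaxOrder α] [DenselyOrdered α] {a : α} {P : α → Prop}
    (h : ∀ᶠ x in 𝓝[>] a, P x) : ∃ b, a < b ∧ ∀ x, a < x → x ≤ b → P x := by
  obtain ⟨b, hab, hsub⟩ := mem_nhdsGT_iff_exists_Ioc_subset.1 h
  exact ⟨b, hab, fun x hax hxb => hsub ⟨hax, hxb⟩⟩

section LpEstimates

variable {α : Type*} [MeasurableSpace α] {μ : Measure α}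

theorem toReal_eLpNorm_le_add_mul_of_ae_norm_le {E F G : Type*} [NormedAddCommGroup E]
    [NormedAddCommGroup F] [NormedAddCommGroup G] {p : ℝ≥0∞} (hp : 1 ≤ p)
    {f : α → E} {g : α → F} {h : α → G} (hg : MemLp g p μ) (hh : MemLp h p μ) {c : ℝ}
    (hc : 0 ≤ c) (hfgh : ∀ᵐ x ∂μ, ‖f x‖ ≤ ‖g x‖ + c * ‖h x‖) :
    (eLpNorm f p μ).toReal ≤ (eLpNorm g p μ).toReal + c * (eLpNorm h p μ).toReal := by
  have key : eLpNorm f p μ ≤ eLpNorm g p μ + ENNReal.ofReal c * eLpNorm h p μ :=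
    calc eLpNorm f p μ ≤ eLpNorm ((fun x => ‖g x‖) + c • fun x => ‖h x‖) p μ :=
          eLpNorm_mono_ae_real hfgh
      _ ≤ eLpNorm (fun x => ‖g x‖) p μ + eLpNorm (c • fun x => ‖h x‖) p μ :=
          eLpNorm_add_le hg.1.norm (hh.1.norm.const_smul c) hp
      _ = eLpNorm g p μ + ENNReal.ofReal c * eLpNorm h p μ := by
          rw [eLpNorm_const_smul, eLpNorm_norm, eLpNorm_norm, Real.enorm_of_nonneg hc]
  have hfin : eLpNorm g p μ + ENNReal.ofReal c * eLpNorm h p μ ≠ ∞ :=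
    ENNReal.add_ne_top.2 ⟨hg.2.ne, ENNReal.mul_ne_top ENNReal.ofReal_ne_top hh.2.ne⟩
  calc (eLpNorm f p μ).toReal ≤ (eLpNorm g p μ + ENNReal.ofReal c * eLpNorm h p μ).toReal :=
        ENNReal.toReal_mono hfin key
    _ = _ := by
        rw [ENNReal.toReal_add hg.2.ne (ENNReal.mul_ne_top ENNReal.ofReal_ne_top hh.2.ne),
          ENNReal.toReal_mul, ENNReal.toReal_ofReal hc]

theorem ae_le_toReal_eLpNorm_top {f : α → ℝ} (hf : eLpNorm f ∞ μ ≠ ∞) :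
    ∀ᵐ x ∂μ, f x ≤ (eLpNorm f ∞ μ).toReal := by
  filter_upwards [enorm_ae_le_eLpNormEssSup f μ] with x hx
  rw [eLpNorm_exponent_top] at hf ⊢
  calc f x ≤ ‖f x‖ := Real.le_norm_self _
    _ = ‖f x‖ₑ.toReal := by simp
    _ ≤ _ := ENNReal.toReal_mono hf hx

theorem toReal_eLpNorm_indicator_le_of_setIntegral_le {p : ℝ} (hp : 0 < p) {f : α → ℝ}
    (hf : MemLp f (ENNReal.ofReal p) μ) {s : Set α} (hs : NullMeasurableSet s μ) {B : ℝ}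
    (hB : ∫ x in s, |f x| ^ p ∂μ ≤ B) :
    (eLpNorm (s.indicator f) (ENNReal.ofReal p) μ).toReal ≤ B ^ p⁻¹ := by
  have hrestrict : eLpNorm (s.indicator f) (ENNReal.ofReal p) μ
      = eLpNorm f (ENNReal.ofReal p) (μ.restrict s) := by
    rw [eLpNorm_congr_ae (indicator_ae_eq_of_ae_eq_set hs.toMeasurable_ae_eq).symm,
      eLpNorm_indicator_eq_eLpNorm_restrict (measurableSet_toMeasurable μ s),
      Measure.restrict_congr_set hs.toMeasurable_ae_eq]
  rw [hrestrict, (hf.restrict s).eLpNorm_eq_integral_rpow_norm (by simpa using hp)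
    ENNReal.ofReal_ne_top, ENNReal.toReal_ofReal hp.le]
  simp only [Real.norm_eq_abs]
  rw [ENNReal.toReal_ofReal (by positivity)]
  exact Real.rpow_le_rpow (by positivity) hB (by positivity)

end LpEstimates

section PointwiseBounds

variable {α : Type*} [MeasurableSpace α] {μ : Measure α} {p : ℝ≥0∞}

theorem toReal_eLpNorm_min_const_le (hp : 1 ≤ p) {f : α → ℝ} (hf : MemLp f p μ)
    (hf0 : ∀ x, 0 ≤ f x) {s t : ℝ} (hs : 0 ≤ s) (ht : 0 < t) :
    (eLpNorm (fun x => min (f x) s) p μ).toReal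
      ≤ (eLpNorm ({x | |f x| < t}.indicator f) p μ).toReal + s / t * (eLpNorm f p μ).toReal := by
  have hS : NullMeasurableSet {x | |f x| < t} μ :=
    nullMeasurableSet_lt hf.1.aemeasurable.abs aemeasurable_const
  refine toReal_eLpNorm_le_add_mul_of_ae_norm_le hp
    (hf.of_le (hf.1.indicator₀ hS) (ae_of_all _ fun x => norm_indicator_le_norm_self _ _)) hf
    (by positivity) (ae_of_all _ fun x => ?_)
  have hmin0 : 0 ≤ min (f x) s := le_min (hf0 x) hs
  simp only [Real.norm_eq_abs, abs_of_nonneg hmin0, abs_of_nonneg (hf0 x)]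
  by_cases hx : |f x| < t
  · rw [indicator_of_mem (show x ∈ {x | |f x| < t} from hx), abs_of_nonneg (hf0 x)]
    linarith [min_le_left (f x) s, mul_nonneg (div_nonneg hs ht.le) (hf0 x)]
  · rw [indicator_of_notMem (show x ∉ {x | |f x| < t} from hx), abs_zero, zero_add,
      div_mul_eq_mul_div, le_div_iff₀ ht]
    rw [not_lt, abs_of_nonneg (hf0 x)] at hx
    nlinarith [min_le_right (f x) s]

variable {g F : α → ℝ} {M : ℝ}

theorem toReal_eLpNorm_le_min_add (hp : 1 ≤ p) (hM : 0 ≤ M) (hg : MemLp g p μ)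
    (hF : MemLp F p μ) (hg0 : ∀ x, 0 ≤ g x) (hFM : ∀ᵐ x ∂μ, F x ≤ M) :
    (eLpNorm g p μ).toReal ≤ (eLpNorm (fun x => min (g x) (2 * M)) p μ).toReal
      + 2 * (eLpNorm (fun x => g x - F x) p μ).toReal := by
  have hmin : MemLp (fun x => min (g x) (2 * M)) p μ :=
    hg.of_le (hg.1.aemeasurable.min aemeasurable_const).aestronglyMeasurable <|
      ae_of_all _ fun x => by
        rw [Real.norm_eq_abs, Real.norm_eq_abs, abs_of_nonneg (le_min (hg0 x) (by positivity)),
          abs_of_nonneg (hg0 x)]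
        exact min_le_left _ _
  refine toReal_eLpNorm_le_add_mul_of_ae_norm_le hp hmin
    (hg.sub hF : MemLp (fun x => g x - F x) p μ) zero_le_two (hFM.mono fun x hx => ?_)
  simp only [Real.norm_eq_abs, Pi.sub_apply, abs_of_nonneg (hg0 x)]
  rcases le_total (g x) (2 * M) with hgM | hgM
  · rw [min_eq_left hgM]
    linarith [le_abs_self (g x), abs_nonneg (g x - F x)]
  · linarith [le_abs_self (g x - F x), abs_nonneg (min (g x) (2 * M))]

theorem toReal_eLpNorm_posPart_sub_le (hp : 1 ≤ p) {η : ℝ} (hη : 0 ≤ η) (hηM : η < M)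
    (hg : MemLp g p μ) (hF : MemLp F p μ) (hF0 : ∀ x, 0 ≤ F x) (hFM : ∀ᵐ x ∂μ, F x ≤ M) :
    (eLpNorm (fun x => max 0 (g x - (M - η))) p μ).toReal
      ≤ (eLpNorm (fun x => g x - F x) p μ).toReal + η / (M - η) * (eLpNorm F p μ).toReal := by
  refine toReal_eLpNorm_le_add_mul_of_ae_norm_le hp (hg.sub hF : MemLp (fun x => g x - F x) p μ) hF
    (div_nonneg hη (by linarith)) (hFM.mono fun x hx => ?_)
  have hFβ : F x - (M - η) ≤ η / (M - η) * F x := by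
    rw [div_mul_eq_mul_div, le_div_iff₀ (by linarith)]
    nlinarith [mul_nonneg (hF0 x) (sq_nonneg η), mul_nonneg (sub_nonneg.2 hx) (sq_nonneg (M - η))]
  simp only [Real.norm_eq_abs, Pi.sub_apply, abs_of_nonneg (le_max_left (0 : ℝ) _),
    abs_of_nonneg (hF0 x)]
  refine max_le (add_nonneg (abs_nonneg _) (mul_nonneg (div_nonneg hη (by linarith)) (hF0 x))) ?_
  linarith [le_abs_self (g x - F x)]

end PointwiseBounds

section Equimeasurability

variable {α : Type*} [MeasurableSpace α] {μ : Measure α}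

def Equimeasurable (μ : Measure α) (f g : α → ℝ) : Prop :=
  ∀ t : ℝ, 0 < t → μ {x | t < f x} = μ {x | t < g x}

namespace Equimeasurable

variable {f g : α → ℝ}

theorem eLpNorm_eq (h : Equimeasurable μ f g) (hf0 : 0 ≤ᵐ[μ] f) (hg0 : 0 ≤ᵐ[μ] g)
    (hf : AEMeasurable f μ) (hg : AEMeasurable g μ) {p : ℝ≥0∞} (hp0 : p ≠ 0) (hp : p ≠ ∞) :
    eLpNorm f p μ = eLpNorm g p μ := by
  have hp_pos : 0 < p.toReal := ENNReal.toReal_pos hp0 hp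
  have hlintegral : ∀ u : α → ℝ, 0 ≤ᵐ[μ] u →
      ∫⁻ x, ‖u x‖ₑ ^ p.toReal ∂μ = ∫⁻ x, ENNReal.ofReal (u x ^ p.toReal) ∂μ := fun u hu =>
    lintegral_congr_ae <| hu.mono fun x (hx : 0 ≤ u x) => by
      simp only [Real.enorm_of_nonneg hx, ENNReal.ofReal_rpow_of_nonneg hx hp_pos.le]
  rw [eLpNorm_eq_lintegral_rpow_enorm_toReal hp0 hp, eLpNorm_eq_lintegral_rpow_enorm_toReal hp0 hp,
    hlintegral f hf0, hlintegral g hg0, lintegral_rpow_eq_lintegral_meas_lt_mul μ hf0 hf hp_pos,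
    lintegral_rpow_eq_lintegral_meas_lt_mul μ hg0 hg hp_pos]
  congr 2
  exact setLIntegral_congr_fun measurableSet_Ioi fun t ht => by rw [h t ht]

theorem min_const (h : Equimeasurable μ f g) (s : ℝ) :
    Equimeasurable μ (fun x => min (f x) s) (fun x => min (g x) s) := by
  intro t ht
  by_cases hts : t < s
  · simpa only [lt_min_iff, hts, and_true] using h t ht
  · simp only [lt_min_iff, hts, and_false, ofPred_false]

theorem posPart_sub_const (h : Equimeasurable μ f g) {β : ℝ} (hβ : 0 ≤ β) :
    Equimeasurable μ (fun x => max 0 (f x - β)) (fun x => max 0 (g x - β)) := by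
  intro t ht
  have hlevel : ∀ u : α → ℝ, {x | t < max 0 (u x - β)} = {x | t + β < u x} := fun u => by
    ext x
    simp only [mem_ofPred_eq, lt_max_iff, not_lt_of_gt ht, false_or]
    constructor <;> intro <;> linarith
  rw [hlevel f, hlevel g]
  exact h (t + β) (by linarith)

end Equimeasurable

end Equimeasurability

namespace IsRearrangement

variable {f fs : ℝ → ℝ}

theorem measurable (h : IsRearrangement f fs) : Measurable fs := by
  have hanti : Antitone fun t : ℝ => fs (max t 0) := fun s t hst =>
    h.2.1 _ _ (by simpa [abs_of_nonneg] using max_le_max hst le_rfl)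
  have hcomp : fs = (fun t : ℝ => fs (max t 0)) ∘ fun x => |x| := by
    funext x
    exact le_antisymm (h.2.1 _ _ (by simp)) (h.2.1 _ _ (by simp))
  rw [hcomp]
  exact hanti.measurable.comp measurable_abs

theorem equimeasurable (h : IsRearrangement f fs) : Equimeasurable volume fs f := h.2.2

theorem eLpNorm_eq (h : IsRearrangement f fs) (hf : AEMeasurable f) (hf0 : ∀ x, 0 ≤ f x)
    {p : ℝ≥0∞} (hp0 : p ≠ 0) (hp : p ≠ ∞) : eLpNorm fs p volume = eLpNorm f p volume :=
  h.equimeasurable.eLpNorm_eq (ae_of_all _ h.1) (ae_of_all _ hf0) h.measurable.aemeasurable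
    hf hp0 hp

theorem memLp (h : IsRearrangement f fs) {p : ℝ≥0∞} (hf : MemLp f p volume)
    (hf0 : ∀ x, 0 ≤ f x) (hp0 : p ≠ 0) (hp : p ≠ ∞) : MemLp fs p volume :=
  ⟨h.measurable.aestronglyMeasurable, by rw [h.eLpNorm_eq hf.1.aemeasurable hf0 hp0 hp]; exact hf.2⟩

end IsRearrangement

theorem IsGaussian.eLpNorm_top_ne_top {F : ℝ → ℝ} (hF : IsGaussian F) :
    eLpNorm F ∞ volume ≠ ∞ := by
  obtain ⟨c, lam, a, hc, hlam, hFx⟩ := hF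
  have hcont : Continuous F := by
    rw [show F = _ from funext hFx]
    fun_prop
  refine (memLp_top_of_bound hcont.aestronglyMeasurable c (ae_of_all _ fun x => ?_)).2.ne
  rw [hFx, Real.norm_eq_abs, abs_of_nonneg (by positivity)]
  exact mul_le_of_le_one_right hc.le (Real.exp_le_one_iff.2 (by nlinarith [sq_nonneg (x - a)]))

theorem Equimeasurable.nrm_eq {p : ℝ} (hp : 0 < p) {f g : ℝ → ℝ} (h : Equimeasurable volume f g)
    (hf0 : ∀ x, 0 ≤ f x) (hg0 : ∀ x, 0 ≤ g x) (hf : AEMeasurable f) (hg : AEMeasurable g) :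
    nrm p f = nrm p g :=
  congrArg ENNReal.toReal <| h.eLpNorm_eq (ae_of_all _ hf0) (ae_of_all _ hg0) hf hg
    (by simpa using hp) ENNReal.ofReal_ne_top

theorem nrm_min_le {p ρ s : ℝ} (hp : 1 ≤ p) (hρ : 0 < ρ) (hs : 0 ≤ s) {f : ℝ → ℝ}
    (hf : MemLp f (ENNReal.ofReal p) volume) (hf0 : ∀ x, 0 ≤ f x) (hf1 : nrm p f = 1) :
    nrm p (fun x => min (f x) s) ≤ nrm p ({x | |f x| < ρ⁻¹}.indicator f) + s * ρ := by
  have h := toReal_eLpNorm_min_const_le (ENNReal.one_le_ofReal.2 hp) hf hf0 hs (inv_pos.2 hρ)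
  rwa [div_inv_eq_mul, ← nrm, ← nrm, ← nrm, hf1, mul_one] at h

theorem IsRearrangement.nrm_eq {f fs : ℝ → ℝ} (h : IsRearrangement f fs) (hf : AEMeasurable f)
    (hf0 : ∀ x, 0 ≤ f x) {p : ℝ} (hp : 0 < p) : nrm p fs = nrm p f :=
  congrArg ENNReal.toReal <| h.eLpNorm_eq hf hf0 (by simpa using hp) ENNReal.ofReal_ne_top

section CloseToBounded

variable {p δ : ℝ} {f fs F : ℝ → ℝ}

theorem one_le_four_mul_nrmInf_mul {ρ τ : ℝ} (hp : 1 ≤ p) (hρ : 0 < ρ) (hτ : τ ≤ 1 / 4)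
    (hδ : δ ≤ 1 / 8) (hf : MemLp f (ENNReal.ofReal p) volume) (hf0 : ∀ x, 0 ≤ f x)
    (hf1 : nrm p f = 1) (hsmall : nrm p ({x | |f x| < ρ⁻¹}.indicator f) ≤ τ)
    (hfs : IsRearrangement f fs) (hF : MemLp F (ENNReal.ofReal p) volume)
    (hFbdd : eLpNorm F ∞ volume ≠ ∞) (hclose : nrm p (fun x => fs x - F x) ≤ δ) :
    1 ≤ 4 * (nrmInf F * ρ) := by
  have hp0 : 0 < p := by linarith
  have hM0 : 0 ≤ nrmInf F := ENNReal.toReal_nonneg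
  have h := toReal_eLpNorm_le_min_add (ENNReal.one_le_ofReal.2 hp) hM0
    (hfs.memLp hf hf0 (by simpa using hp0) ENNReal.ofReal_ne_top) hF hfs.1
    (ae_le_toReal_eLpNorm_top hFbdd)
  change nrm p fs ≤ nrm p _ + 2 * nrm p _ at h
  rw [hfs.nrm_eq hf.1.aemeasurable hf0 hp0, hf1, (hfs.equimeasurable.min_const _).nrm_eq hp0
    (fun x => le_min (hfs.1 x) (by linarith)) (fun x => le_min (hf0 x) (by linarith))
    (hfs.measurable.aemeasurable.min aemeasurable_const)
    (hf.1.aemeasurable.min aemeasurable_const)] at h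
  nlinarith [nrm_min_le hp hρ (by linarith : 0 ≤ 2 * nrmInf F) hf hf0 hf1]

theorem nrm_posPart_sub_nrmInf_le {η : ℝ} (hp : 1 ≤ p) (hη : 0 < η) (hηM : 2 * η ≤ nrmInf F)
    (hf : MemLp f (ENNReal.ofReal p) volume) (hf0 : ∀ x, 0 ≤ f x) (hf1 : nrm p f = 1)
    (hfs : IsRearrangement f fs) (hF0 : ∀ x, 0 ≤ F x) (hF : MemLp F (ENNReal.ofReal p) volume)
    (hFbdd : eLpNorm F ∞ volume ≠ ∞) (hclose : nrm p (fun x => fs x - F x) ≤ δ) :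
    nrm p (fun x => max 0 (f x - (nrmInf F - η)))
      ≤ δ + η / (nrmInf F - η) * (1 + δ) := by
  have hp0 : 0 < p := by linarith
  have hp1 : 1 ≤ ENNReal.ofReal p := ENNReal.one_le_ofReal.2 hp
  have hfsp := hfs.memLp hf hf0 (by simpa using hp0) ENNReal.ofReal_ne_top
  have hFnrm : nrm p F ≤ 1 + δ := by
    have h := toReal_eLpNorm_le_add_mul_of_ae_norm_le (f := F) hp1 hfsp
      (hfsp.sub hF : MemLp (fun x => fs x - F x) _ volume) zero_le_one
      (ae_of_all _ fun x => by
        simpa only [one_mul, Pi.sub_apply, norm_sub_rev (fs x)] using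
          norm_le_norm_add_norm_sub' (F x) (fs x))
    change nrm p F ≤ nrm p fs + 1 * nrm p (fun x => fs x - F x) at h
    linarith [hfs.nrm_eq hf.1.aemeasurable hf0 hp0]
  have h := toReal_eLpNorm_posPart_sub_le (M := nrmInf F) hp1 hη.le (by linarith) hfsp hF hF0
    (ae_le_toReal_eLpNorm_top hFbdd)
  change nrm p _ ≤ nrm p _ + η / (nrmInf F - η) * nrm p F at h
  rw [← (hfs.equimeasurable.posPart_sub_const (by linarith)).nrm_eq hp0
    (fun x => le_max_left _ _) (fun x => le_max_left _ _)
    (aemeasurable_const.max (hfs.measurable.aemeasurable.sub_const _))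
    (aemeasurable_const.max (hf.1.aemeasurable.sub_const _))]
  calc _ ≤ _ := h
    _ ≤ δ + η / (nrmInf F - η) * (1 + δ) := by
      gcongr
      exact div_nonneg hη.le (by linarith)

theorem nrm_min_add_nrm_posPart_le {ρ τ η : ℝ} (hp : 1 ≤ p) (hρ : 0 < ρ) (hτ : τ ≤ 1 / 4)
    (hη : 0 < η) (hηρ : 8 * (η * ρ) ≤ 1) (hδ : δ ≤ 1 / 8)
    (hf : MemLp f (ENNReal.ofReal p) volume) (hf0 : ∀ x, 0 ≤ f x) (hf1 : nrm p f = 1)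
    (hsmall : nrm p ({x | |f x| < ρ⁻¹}.indicator f) ≤ τ) (hfs : IsRearrangement f fs)
    (hF0 : ∀ x, 0 ≤ F x) (hF : MemLp F (ENNReal.ofReal p) volume)
    (hFbdd : eLpNorm F ∞ volume ≠ ∞) (hclose : nrm p (fun x => fs x - F x) ≤ δ) :
    nrm p (fun x => min (f x) η) + nrm p (fun x => max 0 (f x - (nrmInf F - η)))
      ≤ τ + 17 * (η * ρ) + δ := by
  have hδ0 : 0 ≤ δ := ENNReal.toReal_nonneg.trans hclose
  have hMρ := one_le_four_mul_nrmInf_mul hp hρ hτ hδ hf hf0 hf1 hsmall hfs hF hFbdd hclose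
  have hηM : 2 * η ≤ nrmInf F := by nlinarith
  have hlarge := nrm_posPart_sub_nrmInf_le hp hη hηM hf hf0 hf1 hfs hF0 hF hFbdd hclose
  have hratio : η / (nrmInf F - η) ≤ 8 * (η * ρ) := by
    rw [div_le_iff₀ (by linarith)]
    nlinarith
  have hcross := mul_le_mul hratio (show 1 + δ ≤ 2 by linarith) (by linarith)
    (by positivity : (0 : ℝ) ≤ 8 * (η * ρ))
  linarith [nrm_min_le hp hρ hη.le hf hf0 hf1]

end CloseToBounded

theorem eventually_nrm_min_add_nrm_posPart_le {p : ℝ} (hp : 1 ≤ p) {Θ Rf : ℝ → ℝ}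
    (hΘ : Tendsto Θ atTop (𝓝 0)) (hR : Tendsto Rf (𝓝[>] 0) atTop) {ε : ℝ} (hε : 0 < ε) :
    ∀ᶠ η in 𝓝[>] 0, ∀ᶠ δ in 𝓝[>] 0, ∀ f fs F : ℝ → ℝ,
      MemLp f (ENNReal.ofReal p) volume → (∀ x, 0 ≤ f x) → IsNormalized Θ Rf p δ f →
      IsRearrangement f fs → (∀ x, 0 ≤ F x) → MemLp F (ENNReal.ofReal p) volume →
      eLpNorm F ∞ volume ≠ ∞ → nrm p (fun x => fs x - F x) ≤ δ →
      nrm p (fun x => min (f x) η) + nrm p (fun x => max 0 (f x - (nrmInf F - η))) ≤ ε := by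
  have hp0 : 0 < p := by linarith
  obtain ⟨τ, hτ0, hτε, hτ1⟩ : ∃ τ : ℝ, 0 < τ ∧ 3 * τ ≤ ε ∧ τ ≤ 1 / 8 :=
    ⟨min ε 1 / 8, by positivity, by linarith [min_le_left ε 1], by linarith [min_le_right ε 1]⟩
  obtain ⟨ρ, hΘρ, hρ⟩ :=
    ((hΘ.eventually (ge_mem_nhds (Real.rpow_pos_of_pos hτ0 p))).and (eventually_gt_atTop 0)).exists
  filter_upwards [Ioo_mem_nhdsGT (show 0 < τ / (17 * ρ) by positivity)] with η ⟨hη, hητ⟩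
  filter_upwards [hR.eventually_ge_atTop ρ, Ioo_mem_nhdsGT hτ0] with δ hRδ ⟨hδ, hδτ⟩
  intro f fs F hf hf0 hnorm hfs hF0 hF hFbdd hclose
  have hsmall : nrm p ({x | |f x| < ρ⁻¹}.indicator f) ≤ τ := by
    have h := toReal_eLpNorm_indicator_le_of_setIntegral_le hp0 hf
      (nullMeasurableSet_lt hf.1.aemeasurable.abs aemeasurable_const)
      ((hnorm.2 ρ hρ hRδ).2.trans hΘρ)
    rwa [Real.rpow_rpow_inv hτ0.le hp0.ne'] at h
  have hηρ : 17 * (η * ρ) < τ := by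
    rw [lt_div_iff₀ (by positivity)] at hητ
    linarith
  have := nrm_min_add_nrm_posPart_le hp hρ (by linarith) hη (by linarith) (by linarith) hf hf0
    hnorm.1 hsmall hfs hF0 hF hFbdd hclose
  linarith

theorem small_and_large_values_negligible_general (p q r : ℝ) (hp : 1 < p) (hq : 1 < q) (hr : 1 < r)
    (Θ Rf : ℝ → ℝ) (hΘ : Tendsto Θ atTop (nhds 0))
    (hR : Tendsto Rf (nhdsWithin 0 (Ioi 0)) atTop)
    (ε : ℝ) (hε : 0 < ε) :
    ∃ η₀ : ℝ, 0 < η₀ ∧ ∀ η : ℝ, 0 < η → η ≤ η₀ →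
      ∃ δ₀ : ℝ, 0 < δ₀ ∧ ∀ δ : ℝ, 0 < δ → δ ≤ δ₀ →
        -- first component, with exponent p:
        (∀ f fs F : ℝ → ℝ,
          MemLp f (ENNReal.ofReal p) volume → (∀ x, 0 ≤ f x) → nrm p f = 1 →
          IsNormalized Θ Rf p δ f →
          (∀ x, 0 ≤ F x) → IsGaussian F →
          (∃ G H : ℝ → ℝ, ExtremizingTriple p q r F G H) →
          IsRearrangement f fs → nrm p (fun x => fs x - F x) ≤ δ →
          nrm p (fun x => min (f x) η) +
            nrm p (fun x => max 0 (f x - (nrmInf F - η))) ≤ ε) ∧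
        -- second component, with exponent q:
        (∀ g gs G : ℝ → ℝ,
          MemLp g (ENNReal.ofReal q) volume → (∀ x, 0 ≤ g x) → nrm q g = 1 →
          IsNormalized Θ Rf q δ g →
          (∀ x, 0 ≤ G x) → IsGaussian G →
          (∃ F H : ℝ → ℝ, ExtremizingTriple p q r F G H) →
          IsRearrangement g gs → nrm q (fun x => gs x - G x) ≤ δ →
          nrm q (fun x => min (g x) η) +
            nrm q (fun x => max 0 (g x - (nrmInf G - η))) ≤ ε) ∧
        -- third component, with exponent r:
        (∀ h hs H : ℝ → ℝ,
          MemLp h (ENNReal.ofReal r) volume → (∀ x, 0 ≤ h x) → nrm r h = 1 →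
          IsNormalized Θ Rf r δ h →
          (∀ x, 0 ≤ H x) → IsGaussian H →
          (∃ F G : ℝ → ℝ, ExtremizingTriple p q r F G H) →
          IsRearrangement h hs → nrm r (fun x => hs x - H x) ≤ δ →
          nrm r (fun x => min (h x) η) +
            nrm r (fun x => max 0 (h x - (nrmInf H - η))) ≤ ε) := by
  have hP := eventually_nrm_min_add_nrm_posPart_le hp.le hΘ hR hε
  have hQ := eventually_nrm_min_add_nrm_posPart_le hq.le hΘ hR hε
  have hR' := eventually_nrm_min_add_nrm_posPart_le hr.le hΘ hR hε
  obtain ⟨η₀, hη₀, hη⟩ :=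
    ((hP.and (hQ.and hR')).mono fun η h => h.1.and (h.2.1.and h.2.2)).exists_forall_Ioc
  refine ⟨η₀, hη₀, fun η hη0 hηη₀ => ?_⟩
  obtain ⟨δ₀, hδ₀, hδ⟩ := (hη η hη0 hηη₀).exists_forall_Ioc
  refine ⟨δ₀, hδ₀, fun δ hδ0 hδδ₀ => ?_⟩
  obtain ⟨HP, HQ, HR⟩ := hδ δ hδ0 hδδ₀
  exact ⟨fun f fs F hf hf0 _ hnorm hF0 hFg ⟨_, _, hT⟩ hfs hclose =>
      HP f fs F hf hf0 hnorm hfs hF0 hT.1 hFg.eLpNorm_top_ne_top hclose,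
    fun g gs G hg hg0 _ hnorm hG0 hGg ⟨_, _, hT⟩ hgs hclose =>
      HQ g gs G hg hg0 hnorm hgs hG0 hT.2.1 hGg.eLpNorm_top_ne_top hclose,
    fun h hs H hh hh0 _ hnorm hH0 hHg ⟨_, _, hT⟩ hhs hclose =>
      HR h hs H hh hh0 hnorm hhs hH0 hT.2.2.1 hHg.eLpNorm_top_ne_top hclose⟩

theorem small_and_large_values_negligible (p q r : ℝ) (hp : 1 < p) (hq : 1 < q) (hr : 1 < r)
    (hpqr : 1/p + 1/q + 1/r = 2)
    (Θ Rf : ℝ → ℝ) (hΘ : Tendsto Θ atTop (nhds 0))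
    (hR : Tendsto Rf (nhdsWithin 0 (Ioi 0)) atTop)
    (ε : ℝ) (hε : 0 < ε) :
    ∃ η₀ : ℝ, 0 < η₀ ∧ ∀ η : ℝ, 0 < η → η ≤ η₀ →
      ∃ δ₀ : ℝ, 0 < δ₀ ∧ ∀ δ : ℝ, 0 < δ → δ ≤ δ₀ →
        -- first component, with exponent p:
        (∀ f fs F : ℝ → ℝ,
          MemLp f (ENNReal.ofReal p) volume → (∀ x, 0 ≤ f x) → nrm p f = 1 →
          IsNormalized Θ Rf p δ f →
          (∀ x, 0 ≤ F x) → IsGaussian F →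
          (∃ G H : ℝ → ℝ, ExtremizingTriple p q r F G H) →
          IsRearrangement f fs → nrm p (fun x => fs x - F x) ≤ δ →
          nrm p (fun x => min (f x) η) +
            nrm p (fun x => max 0 (f x - (nrmInf F - η))) ≤ ε) ∧
        -- second component, with exponent q:
        (∀ g gs G : ℝ → ℝ,
          MemLp g (ENNReal.ofReal q) volume → (∀ x, 0 ≤ g x) → nrm q g = 1 →
          IsNormalized Θ Rf q δ g →
          (∀ x, 0 ≤ G x) → IsGaussian G →
          (∃ F H : ℝ → ℝ, ExtremizingTriple p q r F G H) →
          IsRearrangement g gs → nrm q (fun x => gs x - G x) ≤ δ →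
          nrm q (fun x => min (g x) η) +
            nrm q (fun x => max 0 (g x - (nrmInf G - η))) ≤ ε) ∧
        -- third component, with exponent r:
        (∀ h hs H : ℝ → ℝ,
          MemLp h (ENNReal.ofReal r) volume → (∀ x, 0 ≤ h x) → nrm r h = 1 →
          IsNormalized Θ Rf r δ h →
          (∀ x, 0 ≤ H x) → IsGaussian H →
          (∃ F G : ℝ → ℝ, ExtremizingTriple p q r F G H) →
          IsRearrangement h hs → nrm r (fun x => hs x - H x) ≤ δ →
          nrm r (fun x => min (h x) η) +
            nrm r (fun x => max 0 (h x - (nrmInf H - η))) ≤ ε) :=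
  small_and_large_values_negligible_general p q r hp hq hr Θ Rf hΘ hR ε hε
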